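/- Let M ≥ 1, let u be a very weak solution with deficit ε, and assume the global bound ∫_{Ω_T}(|u|+|Du|+|F|+1)^{p(·)(1−ε)} dz ≤ M. Suppose Q_{32ρ}^{(λ)}(z₀) ⊂ Ω_T with 0 < ρ ≤ 1 and λ ≥ 1 satisfies λ^{1−ε} ≤ ⨍_{Q_ρ^{(λ)}(z₀)} (|Du|+|F|+1)^{p(·)(1−ε)} dz, and let 0 < ε < (γ₁(n+2)−2n)/(4γ₁). Then λ ≤ (c M ρ^{−(n+2)})^{4γ₁/(γ₁(n+2)−2n)} with c = c(n). Moreover, if in addition ρ ≤ ρ₀ ≤ 1/(64M), then, with p₁ = inf_{Q^{(6)}} p, p₂ = sup_{Q^{(6)}} p and p₀ = p(z₀), one has λ^{(p₂−p₁)/p₀} ≤ c(γ₁,n,L). -/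

import Mathlib

open MeasureTheory Set Metric

noncomputable section

/-- Spatial domain ℝⁿ (Euclidean space). -/
abbrev Spc (n : ℕ) := EuclideanSpace ℝ (Fin n)
/-- Space-time point `z = (x,t)`. -/
abbrev Pt (n : ℕ) := Spc n × ℝ
/-- Values ℝᴺ. -/
abbrev Vec (N : ℕ) := EuclideanSpace ℝ (Fin N)
/-- Matrices ℝ^{N×n} with Frobenius (Euclidean) norm. -/
abbrev Mat (N n : ℕ) := EuclideanSpace ℝ (Fin N × Fin n)

/-- Parabolic distance `d_P(z₁,z₂) = max { |x₁-x₂| , √|t₁-t₂| }`. -/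
def dP {n : ℕ} (z₁ z₂ : Pt n) : ℝ := max (dist z₁.1 z₂.1) (Real.sqrt |z₁.2 - z₂.2|)

/-- Standard parabolic cylinder `Q_ρ(z₀) = B_ρ(x₀) × (t₀-ρ², t₀+ρ²)`. -/
def pCyl {n : ℕ} (z₀ : Pt n) (ρ : ℝ) : Set (Pt n) :=
  closedBall z₀.1 ρ ×ˢ Ioo (z₀.2 - ρ ^ 2) (z₀.2 + ρ ^ 2)

/-- Intrinsic scaled ball `B_ρ^{(λ)}(x₀) = {x : |x-x₀| ≤ λ^{(p₀-2)/(2p₀)} ρ}`, `p₀ = p z₀`. -/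
def iBall {n : ℕ} (p : Pt n → ℝ) (lam : ℝ) (z₀ : Pt n) (ρ : ℝ) : Set (Spc n) :=
  closedBall z₀.1 (lam ^ ((p z₀ - 2) / (2 * p z₀)) * ρ)

/-- Intrinsic parabolic cylinder `Q_ρ^{(λ)}(z₀) = B_ρ^{(λ)}(x₀) × (t₀-ρ², t₀+ρ²)`. -/
def iCyl {n : ℕ} (p : Pt n → ℝ) (lam : ℝ) (z₀ : Pt n) (ρ : ℝ) : Set (Pt n) :=
  iBall p lam z₀ ρ ×ˢ Ioo (z₀.2 - ρ ^ 2) (z₀.2 + ρ ^ 2)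

/-- Assumptions on the variable exponent: `γ₁ ≤ p ≤ 2` on `ΩT`, `ω`-continuity w.r.t. the
parabolic distance, with `ω : [0,∞) → [0,1]` concave, non-decreasing and satisfying the weak
logarithmic condition `ω(ρ) log(1/ρ) < L` for `0 < ρ ≤ 1`. -/
def ExponentOK {n : ℕ} (ΩT : Set (Pt n)) (p : Pt n → ℝ) (γ₁ L : ℝ) (ω : ℝ → ℝ) : Prop :=
  (∀ z ∈ ΩT, γ₁ ≤ p z ∧ p z ≤ 2) ∧
  (∀ z₁ ∈ ΩT, ∀ z₂ ∈ ΩT, |p z₁ - p z₂| ≤ ω (dP z₁ z₂)) ∧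
  ConcaveOn ℝ (Ici 0) ω ∧ MonotoneOn ω (Ici 0) ∧
  (∀ r : ℝ, 0 ≤ ω r ∧ ω r ≤ 1) ∧
  (∀ ρ : ℝ, 0 < ρ → ρ ≤ 1 → ω ρ * Real.log (1 / ρ) < L)

/-- Non-standard `p(z)`-growth and ellipticity conditions on the vector fields `A`, `B`,
with structural parameters `0 < ν < L` and inhomogeneity `F` with `|F|^{p(·)} ∈ L¹(Ω_T)`. -/
def StructureOK {n N : ℕ} (ΩT : Set (Pt n)) (p : Pt n → ℝ)
    (A : Pt n → Mat N n → Mat N n) (B : Pt n → Mat N n → Vec N)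
    (F : Pt n → Mat N n) (ν L : ℝ) : Prop :=
  0 < ν ∧ ν < L ∧
  IntegrableOn (fun z => ‖F z‖ ^ p z) ΩT volume ∧
  ∀ z ∈ ΩT, ∀ ξ : Mat N n,
    ‖A z ξ‖ ≤ L * (1 + ‖ξ‖ + ‖F z‖) ^ (p z - 1) ∧
    ‖B z ξ‖ ≤ L * (1 + ‖ξ‖ + ‖F z‖) ^ (p z - 1) ∧
    ν * ‖ξ‖ ^ p z - ‖F z‖ ^ p z ≤ (inner ℝ (A z ξ) ξ : ℝ)

/-- Time derivative `∂_t φ` of a space-time function. -/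
def timeDeriv {n N : ℕ} (φ : Pt n → Vec N) (z : Pt n) : Vec N :=
  fderiv ℝ φ z (0, 1)

/-- Spatial gradient `Dφ` of a space-time function, as an `N × n` matrix. -/
def spaceGrad {n N : ℕ} (φ : Pt n → Vec N) (z : Pt n) : Mat N n :=
  (WithLp.equiv 2 _).symm fun ij : Fin N × Fin n =>
    fderiv ℝ φ z (EuclideanSpace.single ij.2 1, 0) ij.1

/-- Test functions `φ ∈ C₀^∞(Ω_T, ℝᴺ)`. -/
def IsTest {n N : ℕ} (ΩT : Set (Pt n)) (φ : Pt n → Vec N) : Prop :=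
  ContDiff ℝ (⊤ : ℕ∞) φ ∧ HasCompactSupport φ ∧ tsupport φ ⊆ ΩT

/-- `Du` is the weak spatial gradient of `u` on `Ω_T`. -/
def IsWeakSpatialGradient {n N : ℕ} (ΩT : Set (Pt n)) (u : Pt n → Vec N)
    (Du : Pt n → Mat N n) : Prop :=
  ∀ φ : Pt n → Vec N, IsTest ΩT φ → ∀ (i : Fin N) (j : Fin n),
    ∫ z in ΩT, u z i * fderiv ℝ (fun w => φ w i) z (EuclideanSpace.single j 1, 0)
      = - ∫ z in ΩT, Du z (i, j) * φ z i

/-- `u` is a very weak solution with deficit `ε` of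
`∂_t u - div A(z,Du) = B(z,Du)` in `Ω_T`. -/
def VeryWeakSolution {n N : ℕ} (ΩT : Set (Pt n)) (p : Pt n → ℝ)
    (A : Pt n → Mat N n → Mat N n) (B : Pt n → Mat N n → Vec N)
    (u : Pt n → Vec N) (Du : Pt n → Mat N n) (ε : ℝ) : Prop :=
  IntegrableOn (fun z => ‖u z‖ ^ 2) ΩT volume ∧
  IntegrableOn (fun z => ‖u z‖ ^ (p z * (1 - ε))) ΩT volume ∧
  IntegrableOn (fun z => ‖Du z‖ ^ (p z * (1 - ε))) ΩT volume ∧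
  IsWeakSpatialGradient ΩT u Du ∧
  ∀ φ : Pt n → Vec N, IsTest ΩT φ →
    ∫ z in ΩT, ((inner ℝ (u z) (timeDeriv φ z) : ℝ) - (inner ℝ (A z (Du z)) (spaceGrad φ z) : ℝ))
      = ∫ z in ΩT, (inner ℝ (B z (Du z)) (φ z) : ℝ)

/-- Elementary: `(a+b)^q ≤ 4 (a^q + b^q)` for `0 ≤ a, b` and `0 < q ≤ 2`. -/
lemma rpow_add_le_four {a b q : ℝ} (ha : 0 ≤ a) (hb : 0 ≤ b) (hq0 : 0 < q) (hq2 : q ≤ 2) :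
    (a + b) ^ q ≤ 4 * (a ^ q + b ^ q) := by
  have h4 : (2:ℝ) ^ q ≤ 4 := by
    have h := Real.rpow_le_rpow_of_exponent_le (x := 2) one_le_two hq2
    have h2 := Real.rpow_natCast (2:ℝ) 2
    push_cast at h2
    rw [h2] at h
    norm_num at h
    linarith
  have key : ∀ x y : ℝ, 0 ≤ x → 0 ≤ y → x ≤ y → (x + y) ^ q ≤ 4 * (x ^ q + y ^ q) := by
    intro x y hx hy hxy
    have h1 : (x + y) ^ q ≤ (2 * y) ^ q :=
      Real.rpow_le_rpow (by linarith) (by linarith) hq0.le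
    rw [Real.mul_rpow (by norm_num) hy] at h1
    have hyq : 0 ≤ y ^ q := Real.rpow_nonneg hy q
    have hxq : 0 ≤ x ^ q := Real.rpow_nonneg hx q
    nlinarith
  rcases le_total a b with h | h
  · exact key a b ha hb h
  · rw [add_comm, add_comm (a ^ q)]; exact key b a hb ha h

/-- Elementary: `c^q ≤ c^p + 1` for `0 ≤ c`, `0 < q ≤ p`. -/
lemma rpow_le_rpow_add_one {c q p : ℝ} (hc : 0 ≤ c) (hq0 : 0 < q) (hqp : q ≤ p) :
    c ^ q ≤ c ^ p + 1 := by
  rcases le_or_gt 1 c with h | h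
  · have := Real.rpow_le_rpow_of_exponent_le h hqp
    linarith
  · have h1 : c ^ q ≤ 1 := Real.rpow_le_one hc h.le hq0.le
    have h2 : 0 ≤ c ^ p := Real.rpow_nonneg hc p
    linarith
set_option maxHeartbeats 1000000 in
/-- **Bounds for the intrinsic scaling parameter `λ`.** Under the global bound by `M` and
the intrinsic lower bound `λ^{1-ε} ≤ ⨍_{Q_ρ^{(λ)}(z₀)} (|Du|+|F|+1)^{p(1-ε)}`, for
`0 < ε < (γ₁(n+2)-2n)/(4γ₁)` one has `λ ≤ (c₁ M ρ^{-(n+2)})^{4γ₁/(γ₁(n+2)-2n)}` with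
`c₁ = c₁(n)`; moreover, if also `ρ ≤ ρ₀ ≤ 1/(64M)` then
`λ^{(p₂-p₁)/p₀} ≤ c₂(γ₁,n,L)` where `p₁, p₂` are the inf and sup of `p` over
`Q⁽⁶⁾ = Q_{32ρ}^{(λ)}(z₀)` and `p₀ = p(z₀)`. -/
theorem lambda_bound (n : ℕ) (hn : 2 ≤ n) :
    ∃ c₁ : ℝ, 0 < c₁ ∧
    ∀ γ₁ L : ℝ, 2 * (n : ℝ) / ((n : ℝ) + 2) < γ₁ → γ₁ ≤ 2 → 0 < L →
    ∃ c₂ : ℝ, 0 < c₂ ∧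
      ∀ (N : ℕ) (ν M T : ℝ) (Ω : Set (Spc n)) (p : Pt n → ℝ) (ω : ℝ → ℝ)
        (A : Pt n → Mat N n → Mat N n) (B : Pt n → Mat N n → Vec N)
        (F : Pt n → Mat N n) (u : Pt n → Vec N) (Du : Pt n → Mat N n) (ε : ℝ),
        0 < ν → ν < L → 1 ≤ M → 0 < T → IsOpen Ω → Bornology.IsBounded Ω →
        ExponentOK (Ω ×ˢ Ioo 0 T) p γ₁ L ω →
        StructureOK (Ω ×ˢ Ioo 0 T) p A B F ν L →
        0 < ε → ε < (γ₁ * ((n : ℝ) + 2) - 2 * n) / (4 * γ₁) →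
        VeryWeakSolution (Ω ×ˢ Ioo 0 T) p A B u Du ε →
        (∫ z in Ω ×ˢ Ioo 0 T, (‖u z‖ + ‖Du z‖ + ‖F z‖ + 1) ^ (p z * (1 - ε))) ≤ M →
        ∀ (z₀ : Pt n) (ρ lam : ℝ), 0 < ρ → ρ ≤ 1 → 1 ≤ lam →
          iCyl p lam z₀ (32 * ρ) ⊆ Ω ×ˢ Ioo 0 T →
          lam ^ (1 - ε) ≤
            (⨍ z in iCyl p lam z₀ ρ, (‖Du z‖ + ‖F z‖ + 1) ^ (p z * (1 - ε))) →
          lam ≤ (c₁ * M * ρ ^ (-(((n : ℝ) + 2)))) ^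
              (4 * γ₁ / (γ₁ * ((n : ℝ) + 2) - 2 * n)) ∧
          (ρ ≤ 1 / (64 * M) →
            lam ^ ((sSup (p '' iCyl p lam z₀ (32 * ρ)) -
                sInf (p '' iCyl p lam z₀ (32 * ρ))) / p z₀) ≤ c₂) := by
  classical
  set V : ℝ := (volume (ball (0 : Spc n) 1)).toReal with hVdef
  have hVpos : 0 < V :=
    ENNReal.toReal_pos (measure_ball_pos _ _ one_pos).ne' measure_ball_lt_top.ne
  set c₁ : ℝ := max 1 (1 / (2 * V)) with hc₁def
  have hc₁1 : (1:ℝ) ≤ c₁ := le_max_left _ _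
  have hc₁pos : (0:ℝ) < c₁ := lt_of_lt_of_le one_pos hc₁1
  refine ⟨c₁, hc₁pos, ?_⟩
  intro γ₁ L hγ₁low hγ₁2 hL
  have hγ₁pos : 0 < γ₁ := lt_trans (by positivity) hγ₁low
  set A₀ : ℝ := γ₁ * ((n : ℝ) + 2) - 2 * (n : ℝ) with hA₀
  have hA₀pos : 0 < A₀ := by
    have hn2 : (0:ℝ) < (n : ℝ) + 2 := by positivity
    have := (div_lt_iff₀ hn2).mp hγ₁low
    rw [hA₀]; nlinarith
  set κ : ℝ := A₀ / (4 * γ₁) with hκ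
  have hκpos : 0 < κ := by rw [hκ]; positivity
  set K : ℝ := (Real.log c₁ + ((n : ℝ) + 3) * (L + Real.log 64)) / γ₁ with hK
  refine ⟨Real.exp (K / κ), Real.exp_pos _, ?_⟩
  intro N ν M T Ω p ω A B F u Du ε hν hνL hM hT hΩopen hΩbdd hExp hStr hε0 hεκ hVWS hGlob
    z₀ ρ lam hρ0 hρ1 hlam1 hsub hlow
  set S := Ω ×ˢ Ioo 0 T with hS
  have hSmeas : MeasurableSet S := hΩopen.measurableSet.prod measurableSet_Ioo
  obtain ⟨hpbnd, hωcont, hωconc, hωmono, hωrange, hωlog⟩ := hExp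
  obtain ⟨hν0, hνL', hFint, hABF⟩ := hStr
  obtain ⟨hu2, hu1, hDu1, hwk, hweak⟩ := hVWS
  have hlampos : 0 < lam := lt_of_lt_of_le one_pos hlam1
  have hMpos : 0 < M := lt_of_lt_of_le one_pos hM
  set Q : Set (Pt n) := iCyl p lam z₀ ρ with hQdef
  set Q6 : Set (Pt n) := iCyl p lam z₀ (32 * ρ) with hQ6def
  set a : ℝ := (p z₀ - 2) / (2 * p z₀) with ha
  -- z₀ belongs to Q6, hence to S
  have hz₀Q6 : z₀ ∈ Q6 := by
    rw [hQ6def]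
    constructor
    · exact mem_closedBall_self (by positivity)
    · constructor <;> linarith only [mul_pos hρ0 hρ0]
  have hz₀S : z₀ ∈ S := hsub hz₀Q6
  have hp₀ := hpbnd z₀ hz₀S
  have hp₀pos : 0 < p z₀ := lt_of_lt_of_le hγ₁pos hp₀.1
  -- bounds on ε
  have hεκ' : ε < κ := hεκ
  have hκhalf : κ ≤ 1 / 2 := by
    rw [hκ, div_le_iff₀ (by positivity), hA₀]; nlinarith [Nat.cast_nonneg (α := ℝ) n]
  have hεhalf : ε < 1 / 2 := lt_of_lt_of_le hεκ' hκhalf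
  -- continuity of p on S
  have hdPnonneg : ∀ z₁ z₂ : Pt n, 0 ≤ dP z₁ z₂ := fun z₁ z₂ => le_max_of_le_left dist_nonneg
  have hpc : ContinuousOn p S := by
    intro z hz
    rw [Metric.continuousWithinAt_iff]
    intro ε' hε'
    set ρ₁ : ℝ := Real.exp (-((L + 1) / ε')) with hρ₁
    have hρ₁pos : 0 < ρ₁ := Real.exp_pos _
    have hρ₁le1 : ρ₁ ≤ 1 := by
      rw [hρ₁]
      calc Real.exp (-((L + 1) / ε')) ≤ Real.exp 0 :=
            Real.exp_le_exp.mpr (by rw [neg_nonpos]; positivity)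
        _ = 1 := Real.exp_zero
    have hlog1 : Real.log (1 / ρ₁) = (L + 1) / ε' := by
      rw [one_div, Real.log_inv, hρ₁, Real.log_exp, neg_neg]
    have hωρ₁ : ω ρ₁ < ε' := by
      have h := hωlog ρ₁ hρ₁pos hρ₁le1
      rw [hlog1] at h
      have h0 := (hωrange ρ₁).1
      by_contra hcon
      push_neg at hcon
      have h1 : ε' * ((L + 1) / ε') ≤ ω ρ₁ * ((L + 1) / ε') :=
        mul_le_mul_of_nonneg_right hcon (by positivity)
      have heq : ε' * ((L + 1) / ε') = L + 1 := by field_simp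
      rw [heq] at h1
      linarith only [h, h1]
    refine ⟨min ρ₁ (ρ₁ ^ 2), by positivity, ?_⟩
    intro z' hz' hdist
    have hx : dist z'.1 z.1 ≤ ρ₁ := by
      have h1 : dist z'.1 z.1 ≤ dist z' z := by rw [Prod.dist_eq]; exact le_max_left _ _
      linarith only [h1, hdist, min_le_left ρ₁ (ρ₁ ^ 2)]
    have ht : Real.sqrt |z'.2 - z.2| ≤ ρ₁ := by
      have h2 : dist z'.2 z.2 ≤ dist z' z := by rw [Prod.dist_eq]; exact le_max_right _ _
      have h3 : |z'.2 - z.2| ≤ ρ₁ ^ 2 := by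
        rw [← Real.dist_eq]; linarith only [h2, hdist, min_le_right ρ₁ (ρ₁ ^ 2)]
      calc Real.sqrt |z'.2 - z.2| ≤ Real.sqrt (ρ₁ ^ 2) := Real.sqrt_le_sqrt h3
        _ = ρ₁ := Real.sqrt_sq hρ₁pos.le
    have hdP : dP z' z ≤ ρ₁ := max_le hx ht
    rw [Real.dist_eq]
    calc |p z' - p z| ≤ ω (dP z' z) := hωcont z' hz' z hz
      _ ≤ ω ρ₁ := hωmono (hdPnonneg z' z) (mem_Ici.mpr hρ₁pos.le) hdP
      _ < ε' := hωρ₁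
  -- measurability infrastructure
  have hpm : AEMeasurable p (volume.restrict S) := hpc.aemeasurable hSmeas
  have hqm : AEMeasurable (fun z => p z * (1 - ε)) (volume.restrict S) := hpm.mul_const _
  have hq_pos : ∀ z ∈ S, 0 < p z * (1 - ε) := fun z hz =>
    mul_pos (lt_of_lt_of_le hγ₁pos (hpbnd z hz).1) (by linarith only [hεhalf])
  have hq_le2 : ∀ z ∈ S, p z * (1 - ε) ≤ 2 := by
    intro z hz
    have h2 := (hpbnd z hz).2
    have h4 := mul_le_mul_of_nonneg_right h2 (by linarith only [hεhalf] : (0:ℝ) ≤ 1 - ε)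
    linarith only [h4, hε0]
  have extract : ∀ (w : Pt n → ℝ) (e : Pt n → ℝ), AEMeasurable e (volume.restrict S) →
      (∀ z ∈ S, 0 < e z) → (∀ z, 0 ≤ w z) →
      IntegrableOn (fun z => w z ^ e z) S volume → AEMeasurable w (volume.restrict S) := by
    intro w e hem hepos hwnn hint
    have h1 : AEMeasurable (fun z => (w z ^ e z) ^ (e z)⁻¹) (volume.restrict S) :=
      hint.aestronglyMeasurable.aemeasurable.pow hem.inv
    refine h1.congr ?_
    filter_upwards [ae_restrict_mem hSmeas] with z hz
    exact Real.rpow_rpow_inv (hwnn z) (hepos z hz).ne'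
  have haU : AEMeasurable (fun z => ‖u z‖) (volume.restrict S) :=
    extract _ _ hqm hq_pos (fun z => norm_nonneg _) hu1
  have haDu : AEMeasurable (fun z => ‖Du z‖) (volume.restrict S) :=
    extract _ _ hqm hq_pos (fun z => norm_nonneg _) hDu1
  have haF : AEMeasurable (fun z => ‖F z‖) (volume.restrict S) :=
    extract _ _ hpm (fun z hz => lt_of_lt_of_le hγ₁pos (hpbnd z hz).1)
      (fun z => norm_nonneg _) hFint
  set g : Pt n → ℝ := fun z => (‖u z‖ + ‖Du z‖ + ‖F z‖ + 1) ^ (p z * (1 - ε)) with hgdef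
  set f : Pt n → ℝ := fun z => (‖Du z‖ + ‖F z‖ + 1) ^ (p z * (1 - ε)) with hfdef
  have hgm : AEStronglyMeasurable g (volume.restrict S) :=
    ((((haU.add haDu).add haF).add aemeasurable_const).pow hqm).aestronglyMeasurable
  have hfm : AEStronglyMeasurable f (volume.restrict S) :=
    (((haDu.add haF).add aemeasurable_const).pow hqm).aestronglyMeasurable
  have hμS : volume S < ⊤ := (hΩbdd.prod (Metric.isBounded_Ioo 0 T)).measure_lt_top
  set bd : Pt n → ℝ := fun z =>
    16 * ((‖u z‖ ^ (p z * (1 - ε)) + ‖Du z‖ ^ (p z * (1 - ε))) + ((‖F z‖ ^ p z + 1) + 1))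
    with hbddef
  have hbdint : IntegrableOn bd S volume := by
    refine Integrable.const_mul ?_ 16
    exact (hu1.add hDu1).add ((hFint.add (integrableOn_const hμS.ne)).add
      (integrableOn_const hμS.ne))
  have hfg : ∀ z ∈ S, f z ≤ g z := by
    intro z hz
    exact Real.rpow_le_rpow (by positivity) (by linarith only [norm_nonneg (u z)])
      (hq_pos z hz).le
  have hgbd : ∀ z ∈ S, g z ≤ bd z := by
    intro z hz
    have hq0 := hq_pos z hz
    have hq2 := hq_le2 z hz
    have hqp : p z * (1 - ε) ≤ p z := by
      linarith only [mul_nonneg (le_trans hγ₁pos.le (hpbnd z hz).1) hε0.le]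
    calc (‖u z‖ + ‖Du z‖ + ‖F z‖ + 1) ^ (p z * (1 - ε))
        = ((‖u z‖ + ‖Du z‖) + (‖F z‖ + 1)) ^ (p z * (1 - ε)) := by
          rw [add_assoc (‖u z‖ + ‖Du z‖)]
      _ ≤ 4 * ((‖u z‖ + ‖Du z‖) ^ (p z * (1 - ε)) + (‖F z‖ + 1) ^ (p z * (1 - ε))) :=
          rpow_add_le_four (by positivity) (by positivity) hq0 hq2
      _ ≤ 4 * ((4 * (‖u z‖ ^ (p z * (1 - ε)) + ‖Du z‖ ^ (p z * (1 - ε)))) +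
            (4 * (‖F z‖ ^ (p z * (1 - ε)) + (1:ℝ) ^ (p z * (1 - ε))))) := by
          have h1 := rpow_add_le_four (norm_nonneg (u z)) (norm_nonneg (Du z)) hq0 hq2
          have h2 := rpow_add_le_four (norm_nonneg (F z)) zero_le_one hq0 hq2
          linarith only [h1, h2]
      _ ≤ bd z := by
          rw [Real.one_rpow]
          have h3 : ‖F z‖ ^ (p z * (1 - ε)) ≤ ‖F z‖ ^ p z + 1 :=
            rpow_le_rpow_add_one (norm_nonneg _) hq0 hqp
          rw [hbddef]
          dsimp only
          linarith only [h3]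
  have hgint : IntegrableOn g S volume := by
    refine Integrable.mono' hbdint hgm ?_
    filter_upwards [ae_restrict_mem hSmeas] with z hz
    rw [Real.norm_of_nonneg (Real.rpow_nonneg (by positivity) _)]
    exact hgbd z hz
  have hfint : IntegrableOn f S volume := by
    refine Integrable.mono' hbdint hfm ?_
    filter_upwards [ae_restrict_mem hSmeas] with z hz
    rw [Real.norm_of_nonneg (Real.rpow_nonneg (by positivity) _)]
    exact le_trans (hfg z hz) (hgbd z hz)
  -- Q ⊆ Q6 ⊆ S
  have hraPos : 0 < lam ^ a := Real.rpow_pos_of_pos hlampos a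
  have hQsub : Q ⊆ Q6 := by
    rw [hQdef, hQ6def]
    intro z hz
    refine ⟨closedBall_subset_closedBall ?_ hz.1, Ioo_subset_Ioo ?_ ?_ hz.2⟩
    · rw [← ha]
      exact mul_le_mul_of_nonneg_left (by linarith only [hρ0]) hraPos.le
    · linarith only [sq_nonneg ρ]
    · linarith only [sq_nonneg ρ]
  -- ∫_Q f ≤ M
  have hQf : (∫ z in Q, f z) ≤ M := by
    have h1 : (∫ z in Q, f z) ≤ ∫ z in S, f z := by
      refine setIntegral_mono_set hfint ?_ (hQsub.trans hsub).eventuallyLE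
      filter_upwards with z
      exact Real.rpow_nonneg (by positivity) _
    have h2 : (∫ z in S, f z) ≤ ∫ z in S, g z :=
      setIntegral_mono_on hfint hgint hSmeas hfg
    linarith only [hGlob, h1, h2]
  -- measure of Q
  set r : ℝ := lam ^ a * ρ with hr
  have hrpos : 0 < r := mul_pos hraPos hρ0
  have hμQ : (volume Q).toReal = r ^ n * V * (2 * ρ ^ 2) := by
    rw [hQdef, iCyl, iBall, show lam ^ ((p z₀ - 2) / (2 * p z₀)) * ρ = r from by rw [hr, ha]]
    rw [show (volume : Measure (Pt n)) = (volume : Measure (Spc n)).prod volume from rfl,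
      Measure.prod_prod, Measure.addHaar_closedBall _ _ hrpos.le, Real.volume_Ioo,
      finrank_euclideanSpace_fin, ENNReal.toReal_mul, ENNReal.toReal_mul,
      ENNReal.toReal_ofReal (pow_nonneg hrpos.le n),
      ENNReal.toReal_ofReal (by linarith only [sq_nonneg ρ])]
    rw [← hVdef]
    ring
  -- key inequality
  have key1 : lam ^ ((1:ℝ) - ε) ≤ (r ^ n * V * (2 * ρ ^ 2))⁻¹ * M := by
    rw [setAverage_eq, smul_eq_mul] at hlow
    have hQμnn : 0 ≤ (volume Q).toReal⁻¹ := by positivity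
    calc lam ^ ((1:ℝ) - ε) ≤ (volume Q).toReal⁻¹ * ∫ z in Q, f z := hlow
      _ ≤ (volume Q).toReal⁻¹ * M := mul_le_mul_of_nonneg_left hQf hQμnn
      _ = (r ^ n * V * (2 * ρ ^ 2))⁻¹ * M := by rw [hμQ]
  have hPpos : (0:ℝ) < r ^ n * V * (2 * ρ ^ 2) := by
    have := pow_pos hrpos n; positivity
  have key2 : lam ^ ((1:ℝ) - ε) * (r ^ n * V * (2 * ρ ^ 2)) ≤ M := by
    have h := mul_le_mul_of_nonneg_right key1 hPpos.le
    rwa [inv_mul_eq_div, div_mul_cancel₀ _ hPpos.ne'] at h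
  have hrn : r ^ n = lam ^ (a * (n : ℝ)) * ρ ^ n := by
    rw [hr, mul_pow, ← Real.rpow_natCast (lam ^ a) n, ← Real.rpow_mul hlampos.le]
  -- λ^e ≤ c₁ M ρ^{-(n+2)}
  have keyX : lam ^ ((1 - ε) + a * (n : ℝ)) ≤ c₁ * M * ρ ^ (-(((n : ℝ) + 2))) := by
    have hρrpow : ρ ^ (-(((n : ℝ) + 2))) = (ρ ^ n * ρ ^ 2)⁻¹ := by
      rw [Real.rpow_neg hρ0.le, show ((n : ℝ) + 2) = ((n + 2 : ℕ) : ℝ) from by push_cast; ring,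
        Real.rpow_natCast, pow_add]
    rw [hρrpow, Real.rpow_add hlampos]
    rw [hrn] at key2
    have h1 : lam ^ ((1:ℝ) - ε) * lam ^ (a * (n : ℝ)) ≤ M / ((ρ ^ n * ρ ^ 2) * (2 * V)) := by
      rw [le_div_iff₀ (by have := pow_pos hρ0 n; positivity)]
      calc lam ^ ((1:ℝ) - ε) * lam ^ (a * (n : ℝ)) * (ρ ^ n * ρ ^ 2 * (2 * V))
          = lam ^ ((1:ℝ) - ε) * (lam ^ (a * (n : ℝ)) * ρ ^ n * V * (2 * ρ ^ 2)) := by ring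
        _ ≤ M := key2
    refine h1.trans ?_
    have h2 : M / ((ρ ^ n * ρ ^ 2) * (2 * V)) = (1 / (2 * V)) * M * (ρ ^ n * ρ ^ 2)⁻¹ := by
      field_simp
      try exact Or.inl (by ring)
      try ring
    rw [h2]
    have hinv : (0:ℝ) ≤ (ρ ^ n * ρ ^ 2)⁻¹ := by have := pow_pos hρ0 n; positivity
    have h3 : 1 / (2 * V) ≤ c₁ := le_max_right _ _
    have h4 : (1 / (2 * V)) * M ≤ c₁ * M := mul_le_mul_of_nonneg_right h3 hMpos.le
    exact mul_le_mul_of_nonneg_right h4 hinv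
  -- κ ≤ (1-ε) + a n
  have heκ : κ ≤ (1 - ε) + a * (n : ℝ) := by
    have hnn : (0:ℝ) ≤ (n : ℝ) := Nat.cast_nonneg n
    have h1 : (n : ℝ) / p z₀ ≤ (n : ℝ) / γ₁ := by
      apply div_le_div_of_nonneg_left hnn hγ₁pos hp₀.1
    have e2 : a * (n : ℝ) = (n : ℝ) / 2 - (n : ℝ) / p z₀ := by
      rw [ha]; field_simp
    have e3 : κ = ((n : ℝ) + 2) / 4 - (n : ℝ) / (2 * γ₁) := by
      rw [hκ, hA₀]; field_simp; ring
    have e4 : (n : ℝ) / γ₁ = 2 * ((n : ℝ) / (2 * γ₁)) := by field_simp; try ring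
    rw [e2, e3]
    rw [e3] at hεκ'
    linarith only [h1, e4, hεκ']
  have hlamκX : lam ^ κ ≤ c₁ * M * ρ ^ (-(((n : ℝ) + 2))) :=
    le_trans (Real.rpow_le_rpow_of_exponent_le hlam1 heκ) keyX
  have hXpos : (0:ℝ) < c₁ * M * ρ ^ (-(((n : ℝ) + 2))) :=
    mul_pos (mul_pos hc₁pos hMpos) (Real.rpow_pos_of_pos hρ0 _)
  constructor
  · -- first conclusion
    have h := Real.rpow_le_rpow (Real.rpow_nonneg hlampos.le κ) hlamκX
      (by positivity : (0:ℝ) ≤ κ⁻¹)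
    rw [Real.rpow_rpow_inv hlampos.le hκpos.ne'] at h
    have hκinv : κ⁻¹ = 4 * γ₁ / A₀ := by rw [hκ, inv_div]
    rwa [hκinv] at h
  · -- second conclusion
    intro hρM
    clear hlow hGlob hQf key1 key2 keyX hμQ hgbd hfg hgint hfint hbdint hgm hfm
    clear hbddef hfdef hgdef bd f g
    clear hμS hu1 hu2 hDu1 hFint hwk hweak hABF haU haDu haF hqm hpm extract hpc
    clear hrn hPpos hrpos hr r hQsub hraPos hQdef Q
    set P : Set ℝ := p '' Q6 with hPdef
    have hPne : P.Nonempty := ⟨p z₀, mem_image_of_mem p hz₀Q6⟩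
    have hPsub : P ⊆ Icc γ₁ 2 := by
      rintro _ ⟨z, hz, rfl⟩
      exact ⟨(hpbnd z (hsub hz)).1, (hpbnd z (hsub hz)).2⟩
    have hbddA : BddAbove P := ⟨2, fun y hy => (hPsub hy).2⟩
    have hbddB : BddBelow P := ⟨γ₁, fun y hy => (hPsub hy).1⟩
    have hρM' : ρ * (64 * M) ≤ 1 := by
      have := (le_div_iff₀ (by positivity : (0:ℝ) < 64 * M)).mp hρM
      linarith only [this]
    have hρ64 : 64 * ρ ≤ 1 := by
      linarith only [hρM', mul_le_mul_of_nonneg_left hM hρ0.le]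
    -- dP bound on Q6
    have hra1 : lam ^ a ≤ 1 := by
      apply Real.rpow_le_one_of_one_le_of_nonpos hlam1
      rw [ha]
      apply div_nonpos_of_nonpos_of_nonneg <;> [linarith only [hp₀.2]; positivity]
    have hdQ6 : ∀ z1 ∈ Q6, ∀ z2 ∈ Q6, dP z1 z2 ≤ 64 * ρ := by
      rw [hQ6def]
      intro z1 hz1 z2 hz2
      obtain ⟨hx1, ht1⟩ := hz1
      obtain ⟨hx2, ht2⟩ := hz2
      rw [iBall, ← ha, mem_closedBall] at hx1 hx2
      rw [mem_Ioo] at ht1 ht2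
      apply max_le
      · have htri := dist_triangle z1.1 z₀.1 z2.1
        have hcomm : dist z₀.1 z2.1 = dist z2.1 z₀.1 := dist_comm _ _
        have h32 : lam ^ a * (32 * ρ) ≤ 32 * ρ := by
          have h := mul_le_mul_of_nonneg_right hra1 (by positivity : (0:ℝ) ≤ 32 * ρ)
          linarith only [h]
        linarith only [htri, hcomm, h32, hx1, hx2]
      · have habs : |z1.2 - z2.2| ≤ (64 * ρ) ^ 2 := by
          rw [abs_le]
          constructor <;> linarith only [ht1.1, ht1.2, ht2.1, ht2.2, sq_nonneg ρ]
        calc Real.sqrt |z1.2 - z2.2| ≤ Real.sqrt ((64 * ρ) ^ 2) := Real.sqrt_le_sqrt habs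
          _ = 64 * ρ := Real.sqrt_sq (by positivity)
    -- oscillation bound
    have hosc : sSup P - sInf P ≤ ω (64 * ρ) := by
      have hbound : ∀ y ∈ P, y ≤ sInf P + ω (64 * ρ) := by
        rintro _ ⟨z1, hz1, rfl⟩
        have hlow2 : p z1 - ω (64 * ρ) ≤ sInf P := by
          apply le_csInf hPne
          rintro _ ⟨z2, hz2, rfl⟩
          have h1 := hωcont z1 (hsub hz1) z2 (hsub hz2)
          have h2 := hωmono (hdPnonneg z1 z2) (mem_Ici.mpr (by positivity)) (hdQ6 z1 hz1 z2 hz2)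
          have h3 := le_abs_self (p z1 - p z2)
          linarith only [h1, h2, h3]
        linarith only [hlow2]
      have := csSup_le hPne hbound
      linarith only [this]
    have hp₀mem : p z₀ ∈ P := mem_image_of_mem p hz₀Q6
    have hoscnn : 0 ≤ sSup P - sInf P := by
      have h1 := csInf_le hbddB hp₀mem
      have h2 := le_csSup hbddA hp₀mem
      linarith only [h1, h2]
    set d : ℝ := (sSup P - sInf P) / p z₀ with hd
    have hdnn : 0 ≤ d := div_nonneg hoscnn hp₀pos.le
    set X : ℝ := c₁ * M * ρ ^ (-(((n : ℝ) + 2))) with hX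
    have hX1 : (1:ℝ) ≤ X := by
      have h0 : (1:ℝ) = lam ^ (0:ℝ) := (Real.rpow_zero lam).symm
      calc (1:ℝ) = lam ^ (0:ℝ) := h0
        _ ≤ lam ^ κ := Real.rpow_le_rpow_of_exponent_le hlam1 hκpos.le
        _ ≤ X := hlamκX
    have hXpos' : (0:ℝ) < X := lt_of_lt_of_le one_pos hX1
    have hlogXnn : 0 ≤ Real.log X := Real.log_nonneg hX1
    have hω64 := hωrange (64 * ρ)
    have hlog64nn : (0:ℝ) ≤ Real.log 64 := Real.log_nonneg (by norm_num)
    have hlogρnp : Real.log ρ ≤ 0 := Real.log_nonpos hρ0.le hρ1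
    have hlog64ρ : Real.log (1 / (64 * ρ)) = -(Real.log 64 + Real.log ρ) := by
      rw [one_div, Real.log_inv, Real.log_mul (by norm_num) hρ0.ne']
    have hωlog64 := hωlog (64 * ρ) (by positivity) hρ64
    rw [hlog64ρ] at hωlog64
    have step1 : ω (64 * ρ) * (-Real.log ρ) ≤ L + Real.log 64 := by
      linarith only [hωlog64, mul_le_mul_of_nonneg_right hω64.2 hlog64nn]
    have hlogc₁nn : 0 ≤ Real.log c₁ := Real.log_nonneg hc₁1
    have hlogXle : Real.log X ≤ Real.log c₁ + ((n : ℝ) + 3) * (-Real.log ρ) := by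
      rw [hX, Real.log_mul (by positivity) (Real.rpow_pos_of_pos hρ0 _).ne',
        Real.log_mul hc₁pos.ne' hMpos.ne', Real.log_rpow hρ0]
      have hM64 : M ≤ 1 / (64 * ρ) := by
        rw [le_div_iff₀ (by positivity)]; linarith only [hρM']
      have hlogM : Real.log M ≤ -Real.log ρ := by
        have h1 : Real.log M ≤ Real.log (1 / (64 * ρ)) := Real.log_le_log hMpos hM64
        rw [hlog64ρ] at h1
        linarith only [h1, hlog64nn]
      linarith only [hlogM]
    have hdK : d * Real.log X ≤ K := by
      have hd1 : d ≤ ω (64 * ρ) / γ₁ := by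
        rw [hd]
        exact div_le_div₀ hω64.1 hosc hγ₁pos hp₀.1
      have h2 : d * Real.log X ≤ (ω (64 * ρ) / γ₁) * Real.log X :=
        mul_le_mul_of_nonneg_right hd1 hlogXnn
      have hnum : ω (64 * ρ) * Real.log X ≤ Real.log c₁ + ((n : ℝ) + 3) * (L + Real.log 64) := by
        have hstep : ω (64 * ρ) * Real.log X ≤
            ω (64 * ρ) * (Real.log c₁ + ((n : ℝ) + 3) * (-Real.log ρ)) :=
          mul_le_mul_of_nonneg_left hlogXle hω64.1
        have hp1 := mul_le_mul_of_nonneg_right hω64.2 hlogc₁nn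
        have hp2 := mul_le_mul_of_nonneg_left step1 (by positivity : (0:ℝ) ≤ (n : ℝ) + 3)
        linarith only [hstep, hp1, hp2]
      have h3 : (ω (64 * ρ) / γ₁) * Real.log X ≤ K := by
        rw [hK, div_mul_eq_mul_div]
        exact (div_le_div_iff_of_pos_right hγ₁pos).mpr hnum
      linarith only [h2, h3]
    -- final bound
    have h1 : lam ^ d = (lam ^ κ) ^ (d / κ) := by
      rw [← Real.rpow_mul hlampos.le]
      congr 1
      field_simp
    calc lam ^ d = (lam ^ κ) ^ (d / κ) := h1
      _ ≤ X ^ (d / κ) := Real.rpow_le_rpow (Real.rpow_nonneg hlampos.le _) hlamκX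
          (by positivity)
      _ = Real.exp (Real.log X * (d / κ)) := Real.rpow_def_of_pos hXpos' _
      _ ≤ Real.exp (K / κ) := by
          apply Real.exp_le_exp.mpr
          rw [show Real.log X * (d / κ) = (d * Real.log X) / κ from by ring]
          exact (div_le_div_iff_of_pos_right hκpos).mpr hdK
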